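/- In the two-period static multiple discrete choice panel model with three alternatives, the U* set for outcome y = (1,2) equals {u ∈ ℝ⁶ : Δu₂ - Δu₁ ≥ Δzβ₁ - Δzβ₂}, where U*(y,z) = {u : ∃ (v₁,v₂) ∈ ℝ², for t ∈ {1,2}, choice y_t maximizes the utilities J₁ₜ = z_tβ₁ + v₁ + u₁ₜ, J₂ₜ = z_tβ₂ + v₂ + u₂ₜ, J₃ₜ = u₃ₜ (weak maximization)}. -/
import Mathlib


open scoped BigOperators

def dot {k : ℕ} (x y : Fin k → ℝ) : ℝ := ∑ i, x i * y i

/-- Random utility of alternative `d ∈ {0,1,2}` (alternatives 1,2,3 of the paper)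
at period `t`, with fixed effects `v1, v2` and latent `u d t`. -/
def utilMDC {k : ℕ} (β1 β2 : Fin k → ℝ) (z : Fin 2 → Fin k → ℝ) (v1 v2 : ℝ)
    (u : Fin 3 → Fin 2 → ℝ) (d : Fin 3) (t : Fin 2) : ℝ :=
  if d = 0 then dot (z t) β1 + v1 + u 0 t
  else if d = 1 then dot (z t) β2 + v2 + u 1 t
  else u 2 t

/-- `U*` set in the two-period three-alternative multiple discrete choice panel:
the chosen alternative `y t` weakly maximizes utility in each period. -/
def UstarMDC {k : ℕ} (β1 β2 : Fin k → ℝ) (z : Fin 2 → Fin k → ℝ)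
    (y : Fin 2 → Fin 3) : Set (Fin 3 → Fin 2 → ℝ) :=
  {u | ∃ v1 v2 : ℝ, ∀ t : Fin 2, ∀ d' : Fin 3,
    utilMDC β1 β2 z v1 v2 u d' t ≤ utilMDC β1 β2 z v1 v2 u (y t) t}

theorem mdc_Ustar_12 {k : ℕ} (β1 β2 : Fin k → ℝ) (z : Fin 2 → Fin k → ℝ) :
    UstarMDC β1 β2 z ![0, 1] =
      {u | (u 1 1 - u 1 0) - (u 0 1 - u 0 0) ≥
            (dot (z 1) β1 - dot (z 0) β1) - (dot (z 1) β2 - dot (z 0) β2)} := by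
  ext u
  simp only [UstarMDC, Set.mem_setOf_eq]
  constructor
  · rintro ⟨v1, v2, h⟩
    have h1 := h 0 1
    have h2 := h 1 0
    simp [utilMDC] at h1 h2
    linarith
  · intro h
    set a := dot (z 0) β1 + u 0 0 with ha
    set b := dot (z 0) β2 + u 1 0 with hb
    set B := dot (z 1) β2 + u 1 1 with hB
    refine ⟨max (u 2 0 - a) (u 2 1 - B - (a - b)),
            max (u 2 0 - a) (u 2 1 - B - (a - b)) + (a - b), ?_⟩
    intro t d'
    have m1 : u 2 0 - a ≤ max (u 2 0 - a) (u 2 1 - B - (a - b)) := le_max_left _ _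
    have m2 : u 2 1 - B - (a - b) ≤ max (u 2 0 - a) (u 2 1 - B - (a - b)) := le_max_right _ _
    fin_cases t <;> fin_cases d' <;> simp [utilMDC] <;> linarith
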